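/- Let L be a first-order language with only function symbols and let K be the class of metric L-algebras satisfying a given set of basic quantitative inferences, i.e., formulas of the form (x_1 =_{ε_1} y_1 ∧ … ∧ x_n =_{ε_n} y_n) → s =_ε t where the x_i, y_i are variables and s, t are L-terms (A satisfies such a formula if for every valuation v, whenever d(v(x_i), v(y_i)) ≤ ε_i for all i, then d(v^♯(s), v^♯(t)) ≤ ε). Then K is closed under M-subalgebras (L-substructures with the induced metric) and under M-products (products with pointwise operations and the sup extended metric). -/

import Mathlib

open FirstOrder FirstOrder.Language
open scoped ENNReal

universe u v w x y z

namespace MetricAlgebraPaper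

/-- The sup extended metric on a product of extended metric spaces. -/
noncomputable def supEMetric {I : Type*} (A : I → Type*) [∀ i, EMetricSpace (A i)] :
    EMetricSpace (∀ i, A i) where
  edist f g := ⨆ i, edist (f i) (g i)
  edist_self f := by simp
  edist_comm f g := by simp [edist_comm]
  edist_triangle f g h :=
    iSup_le fun i => (edist_triangle (f i) (g i) (h i)).trans
      (add_le_add (le_iSup (fun j => edist (f j) (g j)) i)
        (le_iSup (fun j => edist (g j) (h j)) i))
  eq_of_edist_eq_zero := by
    intro f g hfg
    funext i
    exact eq_of_edist_eq_zero
      (le_antisymm (le_trans (le_iSup (fun j => edist (f j) (g j)) i) hfg.le) zero_le)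

/-- The pointwise `L`-structure on a product. -/
def piStr (L : FirstOrder.Language.{u, v}) {I : Type*} (A : I → Type*)
    [∀ i, L.Structure (A i)] : L.Structure (∀ i, A i) where
  funMap f a := fun i => Structure.funMap f fun j => a j i
  RelMap r a := ∀ i, Structure.RelMap r fun j => a j i

/-- Satisfaction of a basic quantitative inference
`(x_1 =_{δ_1} y_1 ∧ … ∧ x_m =_{δ_m} y_m) → s =_ε t` (where the `x_k`, `y_k` are
variables) in a metric `L`-algebra `A`. -/
def BQISat {L : FirstOrder.Language.{u, v}} (A : Type w) [EMetricSpace A] [L.Structure A]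
    {V : Type x} {m : ℕ} (xs ys : Fin m → V) (δ : Fin m → ℝ≥0∞)
    (s t : L.Term V) (ε : ℝ≥0∞) : Prop :=
  ∀ v : V → A, (∀ k, edist (v (xs k)) (v (ys k)) ≤ δ k) →
    edist (s.realize v) (t.realize v) ≤ ε

theorem BQISat.of_isometry {L : FirstOrder.Language.{u, v}} {M : Type w} {N : Type z}
    [EMetricSpace M] [EMetricSpace N] [L.Structure M] [L.Structure N]
    {F : Type*} [FunLike F M N] [L.HomClass F M N]
    {V : Type x} {m : ℕ} {xs ys : Fin m → V} {δ : Fin m → ℝ≥0∞} {s t : L.Term V} {ε : ℝ≥0∞}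
    (f : F) (hf : Isometry f) (hN : BQISat N xs ys δ s t ε) :
    BQISat M xs ys δ s t ε := by
  intro v hv
  have hfv := hN (f ∘ v) fun k => by simpa only [Function.comp_apply, hf.edist_eq] using hv k
  rwa [HomClass.realize_term, HomClass.realize_term, hf.edist_eq] at hfv

theorem realize_piStr {L : FirstOrder.Language.{u, v}} {J : Type z} (A : J → Type w)
    [∀ j, L.Structure (A j)] {V : Type x} (u : L.Term V) (v : V → ∀ j, A j) (j : J) :
    (@Term.realize L _ (piStr L A) _ v u) j = u.realize (fun x => v x j) := by
  induction u with
  | var => rfl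
  | func f a ih => exact congrArg (Structure.funMap f) (funext ih)

theorem BQISat.pi {L : FirstOrder.Language.{u, v}} {J : Type z} (A : J → Type w)
    [∀ j, EMetricSpace (A j)] [∀ j, L.Structure (A j)]
    {V : Type x} {m : ℕ} {xs ys : Fin m → V} {δ : Fin m → ℝ≥0∞} {s t : L.Term V} {ε : ℝ≥0∞}
    (hA : ∀ j, BQISat (A j) xs ys δ s t ε) :
    letI := supEMetric A
    letI := piStr L A
    BQISat (∀ j, A j) xs ys δ s t ε := by
  intro v hv
  refine iSup_le fun j => ?_
  rw [realize_piStr A s v j, realize_piStr A t v j]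
  exact hA j (fun x => v x j) fun k =>
    (le_iSup (fun j' => edist (v (xs k) j') (v (ys k) j')) j).trans (hv k)

theorem bqi_class_closed_sub_prod_general (L : FirstOrder.Language.{u, v})
    (ι : Type y) (V : ι → Type x) (m : ι → ℕ)
    (xs ys : ∀ i, Fin (m i) → V i) (δ : ∀ i, Fin (m i) → ℝ≥0∞)
    (s t : ∀ i, L.Term (V i)) (ε : ι → ℝ≥0∞) :
    (∀ (A : Type w) [EMetricSpace A] [L.Structure A],
        (∀ i, BQISat A (xs i) (ys i) (δ i) (s i) (t i) (ε i)) →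
        ∀ S : L.Substructure A,
          ∀ i, BQISat (↥S) (xs i) (ys i) (δ i) (s i) (t i) (ε i)) ∧
    (∀ (J : Type z) (A : J → Type w)
        [∀ j, EMetricSpace (A j)] [∀ j, L.Structure (A j)],
        (∀ j, ∀ i, BQISat (A j) (xs i) (ys i) (δ i) (s i) (t i) (ε i)) →
        letI := supEMetric A
        letI := piStr L A
        ∀ i, BQISat (∀ j, A j) (xs i) (ys i) (δ i) (s i) (t i) (ε i)) := by
  refine ⟨fun A _ _ hA S i => (hA i).of_isometry S.subtype isometry_subtype_coe,
    fun J A _ _ hA i => BQISat.pi A fun j => hA j i⟩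

/-- The class of metric `L`-algebras satisfying a given set of basic
quantitative inferences is closed under M-subalgebras and M-products. -/
theorem bqi_class_closed_sub_prod (L : FirstOrder.Language.{u, v}) [L.IsAlgebraic]
    (ι : Type y) (V : ι → Type x) (m : ι → ℕ)
    (xs ys : ∀ i, Fin (m i) → V i) (δ : ∀ i, Fin (m i) → ℝ≥0∞)
    (s t : ∀ i, L.Term (V i)) (ε : ι → ℝ≥0∞) :
    (∀ (A : Type w) [EMetricSpace A] [L.Structure A],
        (∀ i, BQISat A (xs i) (ys i) (δ i) (s i) (t i) (ε i)) →
        ∀ S : L.Substructure A,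
          ∀ i, BQISat (↥S) (xs i) (ys i) (δ i) (s i) (t i) (ε i)) ∧
    (∀ (J : Type z) (A : J → Type w)
        [∀ j, EMetricSpace (A j)] [∀ j, L.Structure (A j)],
        (∀ j, ∀ i, BQISat (A j) (xs i) (ys i) (δ i) (s i) (t i) (ε i)) →
        letI := supEMetric A
        letI := piStr L A
        ∀ i, BQISat (∀ j, A j) (xs i) (ys i) (δ i) (s i) (t i) (ε i)) :=
  bqi_class_closed_sub_prod_general L ι V m xs ys δ s t ε

end MetricAlgebraPaper
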